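/- arXiv:2506.08522 — 4 statements merged into one kernel-verified Lean document; each statement's English description precedes it below -/
import Mathlib

section
/- Let A be the N×N tridiagonal matrix with diagonal entries 2 except for the (1,1) and (N,N) entries which equal 1, and off-diagonal entries -1 on the sub- and super-diagonal. Then for every a ∈ (0,4), writing θ = arccos((2-a)/2), the characteristic value satisfies det(A - a·I) = -a·sin(Nθ)/sin(θ). -/
open Real Matrix

noncomputable def chainA (N : ℕ) : Matrix (Fin N) (Fin N) ℝ :=
  Matrix.of fun i j =>
    if (i : ℕ) = (j : ℕ) then (if (i : ℕ) = 0 ∨ (i : ℕ) = N - 1 then 1 else 2)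
    else if (i : ℕ) + 1 = (j : ℕ) ∨ (j : ℕ) + 1 = (i : ℕ) then -1 else 0

noncomputable def fentry (d : ℕ → ℝ) (i j : ℕ) : ℝ :=
  if i = j then d i else if i + 1 = j ∨ j + 1 = i then -1 else 0

noncomputable def tri (d : ℕ → ℝ) (n : ℕ) : Matrix (Fin n) (Fin n) ℝ :=
  Matrix.of fun i j => fentry d i j

lemma tri_apply (d : ℕ → ℝ) (n : ℕ) (i j : Fin n) : tri d n i j = fentry d i j := rfl

lemma coe_succAbove {n : ℕ} (p : Fin (n+1)) (k : Fin n) :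
    ((p.succAbove k) : ℕ) = if (k:ℕ) < (p:ℕ) then (k:ℕ) else (k:ℕ)+1 := by
  unfold Fin.succAbove
  split_ifs with h1 h2 h3 <;> simp_all [Fin.lt_def, not_lt]

lemma fentry_zero (d : ℕ → ℝ) {i j : ℕ} (h1 : i ≠ j) (h2 : i + 1 ≠ j) (h3 : j + 1 ≠ i) :
    fentry d i j = 0 := by
  unfold fentry
  rw [if_neg h1, if_neg (by tauto)]

lemma tri_det_rec (d : ℕ → ℝ) (n : ℕ) :
    (tri d (n+2)).det = d (n+1) * (tri d (n+1)).det - (tri d n).det := by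
  rw [Matrix.det_succ_row _ (Fin.last (n+1)), Fin.sum_univ_castSucc, Fin.sum_univ_castSucc]
  have hzero : ∀ j : Fin n,
      (-1:ℝ) ^ ((Fin.last (n+1) : ℕ) + ((((j.castSucc).castSucc) : Fin (n+2)) : ℕ)) *
        tri d (n+2) (Fin.last (n+1)) ((j.castSucc).castSucc) *
        ((tri d (n+2)).submatrix (Fin.last (n+1)).succAbove
          (((j.castSucc).castSucc)).succAbove).det = 0 := by
    intro j
    have : tri d (n+2) (Fin.last (n+1)) ((j.castSucc).castSucc) = 0 := by
      rw [tri_apply]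
      apply fentry_zero <;> simp [Fin.val_last] <;> omega
    rw [this]; ring
  rw [Finset.sum_eq_zero fun j _ => hzero j, zero_add]
  have hlast : ((tri d (n+2)).submatrix (Fin.last (n+1)).succAbove
      (Fin.last (n+1)).succAbove) = tri d (n+1) := by
    ext i k
    simp [tri_apply, Fin.succAbove_last]
  have hmid : ((tri d (n+2)).submatrix (Fin.last (n+1)).succAbove
      ((Fin.last n).castSucc).succAbove).det = -(tri d n).det := by
    rw [Matrix.det_succ_column _ (Fin.last n), Fin.sum_univ_castSucc]
    have hz2 : ∀ i : Fin n,
        (-1:ℝ) ^ ((((i.castSucc) : Fin (n+1)) : ℕ) + ((Fin.last n : Fin (n+1)) : ℕ)) *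
          ((tri d (n+2)).submatrix (Fin.last (n+1)).succAbove
            ((Fin.last n).castSucc).succAbove) i.castSucc (Fin.last n) *
          ((((tri d (n+2)).submatrix (Fin.last (n+1)).succAbove
            ((Fin.last n).castSucc).succAbove)).submatrix (i.castSucc).succAbove
              (Fin.last n).succAbove).det = 0 := by
      intro i
      have : ((tri d (n+2)).submatrix (Fin.last (n+1)).succAbove
          ((Fin.last n).castSucc).succAbove) i.castSucc (Fin.last n) = 0 := by
        rw [Matrix.submatrix_apply, tri_apply]
        apply fentry_zero <;> simp [coe_succAbove, Fin.succAbove_last] <;> omega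
      rw [this]; ring
    rw [Finset.sum_eq_zero fun i _ => hz2 i, zero_add]
    have hminor : (((tri d (n+2)).submatrix (Fin.last (n+1)).succAbove
        ((Fin.last n).castSucc).succAbove).submatrix (Fin.last n).succAbove
          (Fin.last n).succAbove) = tri d n := by
      ext i k
      simp [tri_apply, Fin.succAbove_last, coe_succAbove, Fin.is_lt]
    have hent : ((tri d (n+2)).submatrix (Fin.last (n+1)).succAbove
        ((Fin.last n).castSucc).succAbove) (Fin.last n) (Fin.last n) = -1 := by
      rw [Matrix.submatrix_apply, tri_apply, Fin.succAbove_last]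
      have h1 : ((Fin.castSucc (Fin.last n) : Fin (n+2)) : ℕ) = n := by simp
      have h2 : ((((Fin.last n).castSucc : Fin (n+2)).succAbove (Fin.last n)) : ℕ) = n + 1 := by
        rw [coe_succAbove]; simp
      rw [h1, h2]
      unfold fentry
      rw [if_neg (by omega), if_pos (by omega)]
    rw [hminor, hent]
    have : ((Fin.last n : Fin (n+1)) : ℕ) + ((Fin.last n : Fin (n+1)) : ℕ) = 2 * n := by
      simp; ring
    rw [this]
    rw [show ((-1:ℝ)) ^ (2*n) = 1 from by simp [pow_mul]]
    ring
  have hent1 : tri d (n+2) (Fin.last (n+1)) ((Fin.last n).castSucc) = -1 := by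
    rw [tri_apply]
    have h1 : ((Fin.last (n+1) : Fin (n+2)) : ℕ) = n + 1 := by simp
    have h2 : (((Fin.last n).castSucc : Fin (n+2)) : ℕ) = n := by simp
    rw [h1, h2]
    unfold fentry
    rw [if_neg (by omega), if_pos (by omega)]
  have hent2 : tri d (n+2) (Fin.last (n+1)) (Fin.last (n+1)) = d (n+1) := by
    rw [tri_apply]
    have h1 : ((Fin.last (n+1) : Fin (n+2)) : ℕ) = n + 1 := by simp
    rw [h1]
    unfold fentry
    rw [if_pos rfl]
  rw [hlast, hmid, hent1, hent2]
  have hs1 : ((Fin.last (n+1) : Fin (n+2)) : ℕ) + (((Fin.last n).castSucc : Fin (n+2)) : ℕ) = 2*n+1 := by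
    simp; ring
  have hs2 : ((Fin.last (n+1) : Fin (n+2)) : ℕ) + ((Fin.last (n+1) : Fin (n+2)) : ℕ) = 2*(n+1) := by
    simp; ring
  rw [hs1, hs2]
  rw [show ((-1:ℝ)) ^ (2*n+1) = -1 from by simp [pow_succ, pow_mul],
     show ((-1:ℝ)) ^ (2*(n+1)) = 1 from by simp [pow_mul]]
  ring

lemma D_formula (a θ : ℝ) (hc : 2 - a = 2 * Real.cos θ) :
    ∀ n : ℕ, (tri (fun i => if i = 0 then 1 - a else 2 - a) n).det * Real.sin θ
      = Real.sin ((n+1) * θ) - Real.sin (n * θ) := by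
  intro n
  induction n using Nat.twoStepInduction with
  | zero =>
    simp [Matrix.det_fin_zero]
  | one =>
    rw [Matrix.det_fin_one]
    rw [tri_apply]
    show (if (0:ℕ) = 0 then 1 - a else 2 - a) * Real.sin θ = _
    rw [if_pos rfl]
    push_cast
    rw [show ((1:ℝ)+1) * θ = 2 * θ by ring, Real.sin_two_mul, one_mul]
    linear_combination Real.sin θ * hc
  | more n ih1 ih2 =>
    rw [tri_det_rec]
    rw [if_neg (Nat.succ_ne_zero n)]
    have key : ∀ x : ℝ, Real.sin (x + θ) = 2 * Real.sin x * Real.cos θ - Real.sin (x - θ) := by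
      intro x; rw [Real.sin_add, Real.sin_sub]; ring
    push_cast at ih1 ih2 ⊢
    have e1 : ((n:ℝ) + 2 + 1) * θ = (((n:ℝ) + 1) * θ + θ) + θ := by ring
    have e2 : ((n:ℝ) + 2) * θ = ((n:ℝ) + 1) * θ + θ := by ring
    have e3 : (n:ℝ) * θ = ((n:ℝ) + 1) * θ - θ := by ring
    have e4 : ((n:ℝ) + 1 + 1) * θ = ((n:ℝ) + 1) * θ + θ := by ring
    rw [e1, e2]
    rw [e4] at ih2
    rw [e3] at ih1
    simp only [Real.sin_add, Real.cos_add, Real.sin_sub, Real.cos_sub] at ih1 ih2 ⊢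
    linear_combination (2*Real.cos θ) * ih2 - ih1 + ((tri (fun i => if i = 0 then 1 - a else 2 - a) (n+1)).det * Real.sin θ) * hc + Real.sin (((n:ℝ)+1)*θ) * Real.sin_sq_add_cos_sq θ

theorem stmt0 (N : ℕ) (hN : 2 ≤ N) (a : ℝ) (ha : a ∈ Set.Ioo (0:ℝ) 4) :
    Matrix.det (chainA N - a • (1 : Matrix (Fin N) (Fin N) ℝ)) =
      -a * Real.sin (N * Real.arccos ((2 - a) / 2)) /
        Real.sin (Real.arccos ((2 - a) / 2)) := by
  obtain ⟨ha0, ha4⟩ := ha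
  set θ := Real.arccos ((2 - a) / 2) with hθ
  have hcos : Real.cos θ = (2-a)/2 := Real.cos_arccos (by linarith) (by linarith)
  have hc : 2 - a = 2 * Real.cos θ := by rw [hcos]; ring
  have hsin : 0 < Real.sin θ := by
    rw [hθ, Real.sin_arccos]
    apply Real.sqrt_pos.2
    nlinarith
  have hs : Real.sin θ ≠ 0 := ne_of_gt hsin
  obtain ⟨m, rfl⟩ : ∃ m, N = m + 2 := ⟨N - 2, by omega⟩
  have hM : chainA (m+2) - a • (1 : Matrix (Fin (m+2)) (Fin (m+2)) ℝ)
      = tri (fun i => (if i = 0 ∨ i = m + 1 then 1 else 2) - a) (m+2) := by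
    ext i j
    simp only [Matrix.sub_apply, Matrix.smul_apply, Matrix.one_apply, chainA, tri, fentry,
      Matrix.of_apply, smul_eq_mul, Nat.add_sub_cancel]
    by_cases h : (i:ℕ) = (j:ℕ)
    · have hij : i = j := Fin.ext h
      subst hij
      rw [if_pos rfl, if_pos rfl, if_pos rfl, mul_one]
      norm_num
    · have hij : i ≠ j := fun hh => h (by rw [hh])
      rw [if_neg h, if_neg hij, if_neg h, mul_zero, sub_zero]
  rw [hM, tri_det_rec]
  have hcongr : ∀ k, k ≤ m + 1 → tri (fun i => (if i = 0 ∨ i = m + 1 then 1 else 2) - a) k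
      = tri (fun i => if i = 0 then 1 - a else 2 - a) k := by
    intro k hk
    ext i j
    rw [tri_apply, tri_apply]
    unfold fentry
    by_cases h : (i:ℕ) = (j:ℕ)
    · rw [if_pos h, if_pos h]
      have h1 : (i:ℕ) ≠ m + 1 := by have := i.isLt; omega
      by_cases h0 : (i:ℕ) = 0 <;> simp [h0, h1]
    · rw [if_neg h, if_neg h]
  rw [hcongr (m+1) le_rfl, hcongr m (by omega)]
  have D1 := D_formula a θ hc (m+1)
  have D0 := D_formula a θ hc m
  rw [eq_div_iff hs]
  rw [if_pos (Or.inr rfl)]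
  push_cast at D1 D0 ⊢
  have e1 : ((m:ℝ) + 1 + 1) * θ = ((m:ℝ) + 1) * θ + θ := by ring
  have e2 : ((m:ℝ) + 2) * θ = ((m:ℝ) + 1) * θ + θ := by ring
  have e3 : (m:ℝ) * θ = ((m:ℝ) + 1) * θ - θ := by ring
  rw [e1] at D1
  rw [e3] at D0
  rw [e2]
  simp only [Real.sin_add, Real.sin_sub] at D1 D0 ⊢
  linear_combination (1-a) * D1 - D0 - Real.sin (((m:ℝ)+1)*θ) * hc
end

section
/- The eigenvalues of the N×N matrix A (tridiagonal with diagonal (1,2,...,2,1) and off-diagonals -1) are exactly a_N^i = 2(1 - cos((i-1)π/N)) for i = 1,...,N, each with multiplicity one; equivalently, det(A - a·I) = (-1)^N ∏_{i=1}^N (a - 2(1 - cos((i-1)π/N))). -/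
/-!
For `k < N` put `θ = k * π / N`. The vector `j ↦ cos ((j + 1/2) * θ)` is an eigenvector of
`chainA N` with eigenvalue `2 * (1 - cos θ)`: in the interior rows this is
`cos (y - θ) + cos (y + θ) = 2 * cos θ * cos y`, and the corner entries `1` are absorbed by the
reflection symmetries of this vector about `j = -1/2` and, since `N * θ = k * π`, about
`j = N - 1/2`. These `N` eigenvalues are distinct, so they are the simple roots of the
characteristic polynomial.
-/

open Real Matrix Finset

open Polynomial

namespace Matrix

variable {R n : Type*} [CommRing R] [Fintype n] [DecidableEq n]

theorem det_sub_smul_one (M : Matrix n n R) (a : R) :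
    (M - a • (1 : Matrix n n R)).det = (-1) ^ Fintype.card n * M.charpoly.eval a := by
  rw [eval_charpoly, ← det_neg, neg_sub, scalar_apply, smul_one_eq_diagonal]

theorem charpoly_eq_prod_of_eigenvectors [IsDomain R] {α : Type*} (M : Matrix n n R)
    (s : Finset α) (μ : α → R) (hμ : Set.InjOn μ s) (hs : #s = Fintype.card n)
    (hv : ∀ k ∈ s, ∃ v ≠ 0, M *ᵥ v = μ k • v) :
    M.charpoly = ∏ k ∈ s, (X - C (μ k)) := by
  refine eq_of_degree_sub_lt_of_eval_index_eq s hμ ?_ fun k hk => ?_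
  · have hdeg : M.charpoly.degree = #s := by rw [charpoly_degree_eq_dim, hs]
    rw [← hdeg]
    refine degree_sub_lt_left ?_ M.charpoly_monic.ne_zero ?_
    · rw [hdeg, degree_prod]
      simp
    · rw [M.charpoly_monic.leadingCoeff, (monic_prod_X_sub_C μ s).leadingCoeff]
  · obtain ⟨v, hv0, hMv⟩ := hv k hk
    rw [eval_prod, prod_eq_zero hk (by simp), eval_charpoly, ← exists_mulVec_eq_zero_iff]
    refine ⟨v, hv0, ?_⟩
    rw [sub_mulVec, hMv, scalar_apply, ← smul_one_eq_diagonal, smul_mulVec, one_mulVec, sub_self]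

end Matrix

theorem chainA_mulVec_apply {N : ℕ} (hN : 2 ≤ N) (f : ℤ → ℝ) (h0 : f (-1) = f 0)
    (hN' : f N = f (N - 1)) (j : Fin N) :
    (chainA N *ᵥ fun i => f i) j = 2 * f j - f (j - 1) - f (j + 1) := by
  have hmem : ∀ x : ℤ, x ∈ (range N).map (Nat.castEmbedding : ℕ ↪ ℤ) ↔ 0 ≤ x ∧ x < N := by
    intro x
    simp only [mem_map, mem_range, Nat.castEmbedding_apply]
    exact ⟨by rintro ⟨a, ha, rfl⟩; omega, fun hx => ⟨x.toNat, by omega, by omega⟩⟩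
  -- indices live in `ℤ` so that `j - 1` is not truncated at `j = 0`
  have hrow : (chainA N *ᵥ fun i => f i) j = ∑ i ∈ (range N).map (Nat.castEmbedding : ℕ ↪ ℤ),
      ((if i = (j : ℤ) then (if (j : ℕ) = 0 ∨ (j : ℕ) = N - 1 then 1 else 2) * f i else 0)
        + (if i = (j : ℤ) - 1 then -f i else 0) + (if i = (j : ℤ) + 1 then -f i else 0)) := by
    rw [sum_map, ← Fin.sum_univ_eq_sum_range]
    refine Fintype.sum_congr (fun i : Fin N => chainA N j i * f i) _ fun i => ?_
    simp only [chainA, of_apply, Nat.castEmbedding_apply]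
    split_ifs <;> first | omega | ring
  rw [hrow, sum_add_distrib, sum_add_distrib, sum_ite_eq', sum_ite_eq', sum_ite_eq']
  simp only [hmem]
  obtain ⟨j, hj⟩ := j
  dsimp only
  rcases Nat.eq_zero_or_pos j with rfl | hj0
  · rw [if_pos (by omega), if_pos (by omega), if_neg (by omega), if_pos (by omega),
      Nat.cast_zero, zero_sub, h0]
    ring
  rcases eq_or_ne j (N - 1) with rfl | hjN
  · rw [if_pos (by omega), if_pos (by omega), if_pos (by omega), if_neg (by omega),
      show ((N - 1 : ℕ) : ℤ) + 1 = N by omega, hN', show ((N - 1 : ℕ) : ℤ) = N - 1 by omega]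
    ring
  · rw [if_pos (by omega), if_neg (by omega), if_pos (by omega), if_pos (by omega)]
    ring

theorem chainA_mulVec_eq_smul {N : ℕ} (hN : 2 ≤ N) (f : ℤ → ℝ) (μ : ℝ) (h0 : f (-1) = f 0)
    (hN' : f N = f (N - 1)) (hf : ∀ x, 2 * f x - f (x - 1) - f (x + 1) = μ * f x) :
    (chainA N *ᵥ fun i => f i) = μ • fun i : Fin N => f i := by
  ext j
  rw [chainA_mulVec_apply hN f h0 hN', hf, Pi.smul_apply, smul_eq_mul]

theorem chainA_exists_eigenvector {N : ℕ} (hN : 2 ≤ N) {k : ℕ} (hk : k < N) :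
    ∃ v ≠ 0, chainA N *ᵥ v = (2 * (1 - cos (k * π / N))) • v := by
  have hN0 : (0 : ℝ) < N := by exact_mod_cast (by omega : 0 < N)
  set θ := k * π / N with hθ
  have hNθ : N * θ = k * π := by rw [hθ]; field_simp
  set f : ℤ → ℝ := fun x => cos ((x + 1 / 2) * θ)
  refine ⟨fun i => f i, fun hv => ?_, chainA_mulVec_eq_smul hN f _ ?_ ?_ fun x => ?_⟩
  · have hθ0 : 0 ≤ θ := by positivity
    have hθπ : θ < π := by
      rw [hθ, div_lt_iff₀ hN0, mul_comm]
      gcongr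
    have hpos : 0 < f 0 := by
      refine cos_pos_of_mem_Ioo ⟨?_, ?_⟩ <;> push_cast <;> linarith
    exact hpos.ne' (congrFun hv ⟨0, by omega⟩)
  · simp only [f]
    rw [← cos_neg]
    congr 1
    push_cast
    ring
  · simp only [f]
    push_cast
    rw [show ((N : ℝ) + 1 / 2) * θ = θ / 2 + k * π by linarith,
      show ((N : ℝ) - 1 + 1 / 2) * θ = k * π - θ / 2 by linarith,
      cos_add_nat_mul_pi, cos_nat_mul_pi_sub]
  · simp only [f]
    push_cast
    rw [show ((x : ℝ) - 1 + 1 / 2) * θ = (x + 1 / 2) * θ - θ by ring,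
      show ((x : ℝ) + 1 + 1 / 2) * θ = (x + 1 / 2) * θ + θ by ring, cos_sub, cos_add]
    ring

theorem injOn_chainA_eigenvalue (N : ℕ) :
    Set.InjOn (fun k : ℕ => 2 * (1 - cos (k * π / N))) (range N) := by
  intro k hk l hl hkl
  have hmem : ∀ m ∈ range N, (m : ℝ) * π / N ∈ Set.Icc 0 π := fun m hm => by
    have hN : (0 : ℝ) < N := Nat.cast_pos.2 (Nat.zero_lt_of_lt (mem_range.1 hm))
    refine ⟨by positivity, ?_⟩
    rw [div_le_iff₀ hN, mul_comm]
    gcongr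
    exact_mod_cast (mem_range.1 hm).le
  have hcos := injOn_cos (hmem k hk) (hmem l hl) (by simpa using hkl)
  have hN : (N : ℝ) ≠ 0 := Nat.cast_ne_zero.2 (Nat.ne_zero_of_lt (mem_range.1 hk))
  rw [div_left_inj' hN, mul_left_inj' pi_ne_zero] at hcos
  exact_mod_cast hcos

theorem stmt2 (N : ℕ) (hN : 2 ≤ N) (a : ℝ) :
    Matrix.det (chainA N - a • (1 : Matrix (Fin N) (Fin N) ℝ)) =
      (-1) ^ N * ∏ i ∈ Finset.range N, (a - 2 * (1 - Real.cos (i * Real.pi / N))) := by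
  rw [det_sub_smul_one, (chainA N).charpoly_eq_prod_of_eigenvectors (range N) _
    (injOn_chainA_eigenvalue N) (by simp) fun k hk => chainA_exists_eigenvector hN (mem_range.1 hk),
    eval_prod, Fintype.card_fin]
  simp only [eval_sub, eval_X, eval_C]
end

section
/- Let A be the n×n tridiagonal matrix with diagonal (1,2,...,2,1) and off-diagonals -1, and let à be the mn×mn block tridiagonal matrix with diagonal blocks (A+I_n, A+2I_n, ..., A+2I_n, A+I_n) and off-diagonal blocks -I_n. Then det(à - a·I_{mn}) = ∏_{γ=1}^m det(A + (a_m^γ - a) I_n), where a_m^γ = 2(1 - cos((γ-1)π/m)). Consequently det(à - a·I) = (-1)^{mn} ∏_{γ=1}^m ∏_{α=1}^n (a - (a_m^γ + a_n^α)) with a_n^α = 2(1 - cos((α-1)π/n)). -/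
open Real Matrix Finset

noncomputable def blockA (m n : ℕ) : Matrix (Fin m × Fin n) (Fin m × Fin n) ℝ :=
  Matrix.of fun p q =>
    if (p.1 : ℕ) = (q.1 : ℕ) then
      chainA n p.2 q.2 +
        (if (p.1 : ℕ) = 0 ∨ (p.1 : ℕ) = m - 1 then 1 else 2) *
          (if p.2 = q.2 then 1 else 0)
    else if (p.1 : ℕ) + 1 = (q.1 : ℕ) ∨ (q.1 : ℕ) + 1 = (p.1 : ℕ) then
      (if p.2 = q.2 then -1 else 0)
    else 0

open Kronecker

/-!
Write `λ_γ = 2 (1 - cos (γπ/m))`. The vectors `j ↦ cos ((2j+1) γπ/(2m))`, `γ < m`, are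
eigenvectors of `A_m` with eigenvalues `λ_γ` (discrete cosine transform), and they are mutually
orthogonal, so the matrix `P` they form is invertible. Since `Ã = A_m ⊗ I_n + I_m ⊗ A_n`,
conjugating `Ã - a I` by `P ⊗ I_n` gives the block diagonal matrix with blocks
`A_n + (λ_γ - a) I_n`. Diagonalising `A_n` in the same way gives the eigenvalue product.
-/

namespace Matrix

variable {ι κ R : Type*} [Fintype ι] [DecidableEq ι] [Fintype κ] [DecidableEq κ] [CommRing R]

theorem det_eq_det_of_mul_eq_mul {A B P : Matrix ι ι R} (hP : IsUnit P.det) (h : A * P = P * B) :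
    A.det = B.det := by
  have := congrArg det h
  rw [det_mul, det_mul, mul_comm] at this
  exact hP.mul_left_cancel this

theorem det_add_smul_one_of_mul_eq_mul_diagonal {A P : Matrix ι ι R} {d : ι → R}
    (hP : IsUnit P.det) (h : A * P = P * diagonal d) (c : R) :
    (A + c • 1).det = ∏ i, (d i + c) := by
  rw [← det_diagonal]
  refine det_eq_det_of_mul_eq_mul hP ?_
  rw [← diagonal_add, ← smul_one_eq_diagonal, mul_add, Matrix.mul_smul, mul_one, add_mul, h,
    smul_mul, one_mul]

theorem det_diagonal_kronecker_one_add_one_kronecker (d : ι → R) (B : Matrix κ κ R) :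
    (diagonal d ⊗ₖ (1 : Matrix κ κ R) + 1 ⊗ₖ B).det = ∏ i, (B + d i • 1).det := by
  rw [diagonal_kronecker, one_kronecker, ← coe_reindexLinearEquiv R R, ← map_add,
    ← blockDiagonal_add, coe_reindexLinearEquiv, det_reindex_self, det_blockDiagonal]
  simp only [Pi.add_apply, add_comm]

theorem det_kronecker_one_add_one_kronecker {A P : Matrix ι ι R} {d : ι → R}
    (hP : IsUnit P.det) (h : A * P = P * diagonal d) (B : Matrix κ κ R) :
    (A ⊗ₖ (1 : Matrix κ κ R) + 1 ⊗ₖ B).det = ∏ i, (B + d i • 1).det := by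
  rw [← det_diagonal_kronecker_one_add_one_kronecker]
  refine det_eq_det_of_mul_eq_mul (P := P ⊗ₖ 1) ?_ ?_
  · rw [det_kronecker, det_one, one_pow, mul_one]
    exact hP.pow _
  · simp only [add_mul, mul_add, ← mul_kronecker_mul, h, one_mul, mul_one]

end Matrix

theorem two_mul_sin_mul_sum_range_cos_odd_mul (ψ : ℝ) (n : ℕ) :
    2 * sin ψ * ∑ j ∈ range n, cos ((2 * j + 1) * ψ) = sin (2 * n * ψ) := by
  induction n with
  | zero => simp
  | succ n ih =>
    rw [sum_range_succ, mul_add, ih, two_mul_sin_mul_cos,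
      show ψ - (2 * n + 1) * ψ = -(2 * n * ψ) by ring, sin_neg]
    push_cast
    ring_nf

theorem sum_range_cos_odd_mul_eq_zero {n : ℕ} {k : ℤ} (hk₀ : k ≠ 0) (hk : |k| < 2 * n) :
    ∑ j ∈ range n, cos ((2 * j + 1) * (k * π / (2 * n))) = 0 := by
  have hn : (n : ℝ) ≠ 0 := by
    have : (0 : ℤ) < n := by linarith [abs_nonneg k]
    exact_mod_cast this.ne'
  have hsin : sin (k * π / (2 * n)) ≠ 0 := by
    rw [Ne, sin_eq_zero_iff]
    rintro ⟨l, hl⟩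
    have hkl : k = 2 * n * l := by
      field_simp at hl
      exact_mod_cast (by linarith [hl] : (k : ℝ) = 2 * n * l)
    exact hk₀ (Int.eq_zero_of_abs_lt_dvd ⟨l, hkl⟩ hk)
  have h := two_mul_sin_mul_sum_range_cos_odd_mul (k * π / (2 * n)) n
  rw [show 2 * (n : ℝ) * (k * π / (2 * n)) = k * π by field_simp, sin_int_mul_pi] at h
  simpa [hsin] using h

/-- The reflection conditions on `c` absorb the boundary rows, whose diagonal entry is `1`. -/
theorem sum_chainA_mul_of_reflect {m : ℕ} (hm : 2 ≤ m) {c : ℤ → ℝ} (hc₀ : c (-1) = c 0)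
    (hcm : c m = c (m - 1)) (j : Fin m) :
    ∑ k, chainA m j k * c k = 2 * c j - c (j - 1) - c (j + 1) := by
  obtain ⟨J, hJ⟩ := j
  set d : ℝ := if J = 0 ∨ J = m - 1 then 1 else 2 with hd
  have hterm : ∀ k : ℕ, (if J = k then d else if J + 1 = k ∨ k + 1 = J then -1 else 0) * c k =
      (if k = J then d * c J else 0) - (if k = J + 1 then c k else 0)
        - (if k + 1 = J then c k else 0) := by
    intro k
    split_ifs <;> first | (subst_vars; ring1) | ring1 | omega
  refine (Fin.sum_univ_eq_sum_range
    (fun k => (if J = k then d else if J + 1 = k ∨ k + 1 = J then -1 else 0) * c k) m).trans ?_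
  simp only [hterm, sum_sub_distrib, sum_ite_eq', mem_range, hJ, if_true]
  rcases J with _ | i
  · simp only [hd, true_or, if_true, one_mul, show 1 < m by omega, Nat.cast_zero, Nat.cast_one,
      zero_add, Nat.add_eq_zero_iff, one_ne_zero, and_false, if_false, sum_const_zero, sub_zero,
      zero_sub, hc₀]
    ring
  · simp only [Nat.cast_add, Nat.cast_one, add_sub_cancel_right, add_left_inj, sum_ite_eq',
      mem_range, if_pos (by omega : i < m)]
    by_cases hi : i + 1 + 1 < m
    · rw [if_pos hi, hd, if_neg (by omega)]
      ring
    · have hm' : (m : ℤ) - 1 = i + 1 := by omega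
      rw [if_neg hi, hd, if_pos (by omega), ← hm', sub_add_cancel, hcm]
      ring

noncomputable def pathEigenvalue (n γ : ℕ) : ℝ := 2 * (1 - cos (γ * π / n))

noncomputable def cosineMode (n γ : ℕ) (s : ℤ) : ℝ := cos ((2 * s + 1) * (γ * π / (2 * n)))

noncomputable def dctMatrix (n : ℕ) : Matrix (Fin n) (Fin n) ℝ :=
  of fun j γ => cosineMode n γ j

theorem cosineMode_neg_one (n γ : ℕ) : cosineMode n γ (-1) = cosineMode n γ 0 := by
  simp only [cosineMode, Int.cast_neg, Int.cast_one, Int.cast_zero]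
  rw [show (2 * -1 + 1 : ℝ) = -(2 * 0 + 1) by norm_num, neg_mul, cos_neg]

theorem cosineMode_natCast {n : ℕ} (hn : n ≠ 0) (γ : ℕ) :
    cosineMode n γ n = cosineMode n γ (n - 1) := by
  have hn' : (n : ℝ) ≠ 0 := Nat.cast_ne_zero.mpr hn
  set t := (γ : ℝ) * π / (2 * n)
  have h₁ : (2 * ((n : ℤ) : ℝ) + 1) * t = t + γ * π := by
    simp only [t]; push_cast; field_simp; ring
  have h₂ : (2 * (((n : ℤ) - 1 : ℤ) : ℝ) + 1) * t = γ * π - t := by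
    simp only [t]; push_cast; field_simp; ring
  rw [cosineMode, cosineMode, h₁, h₂, cos_add_nat_mul_pi, cos_nat_mul_pi_sub]

theorem cosineMode_sub_one_add_cosineMode_add_one (n γ : ℕ) (s : ℤ) :
    cosineMode n γ (s - 1) + cosineMode n γ (s + 1) =
      2 * cos (γ * π / n) * cosineMode n γ s := by
  rw [mul_right_comm, cosineMode, cosineMode, cosineMode, two_mul_cos_mul_cos]
  push_cast
  congr 1 <;> congr 1 <;> ring

theorem chainA_mul_dctMatrix {n : ℕ} (hn : 2 ≤ n) :
    chainA n * dctMatrix n = dctMatrix n * diagonal fun γ : Fin n => pathEigenvalue n γ := by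
  ext j γ
  rw [mul_apply, mul_diagonal]
  simp only [dctMatrix, of_apply]
  rw [sum_chainA_mul_of_reflect hn (cosineMode_neg_one n γ) (cosineMode_natCast (by omega) γ),
    sub_sub, cosineMode_sub_one_add_cosineMode_add_one]
  unfold pathEigenvalue
  ring

theorem dctMatrix_transpose_mul_self (n : ℕ) :
    (dctMatrix n)ᵀ * dctMatrix n =
      diagonal fun γ : Fin n => if (γ : ℕ) = 0 then (n : ℝ) else n / 2 := by
  ext γ γ'
  have hprod : ∀ j : ℕ, cosineMode n γ j * cosineMode n γ' j =
      (cos ((2 * j + 1) * (((γ - γ' : ℤ) : ℝ) * π / (2 * n)))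
        + cos ((2 * j + 1) * (((γ + γ' : ℤ) : ℝ) * π / (2 * n)))) / 2 := by
    intro j
    rw [cosineMode, cosineMode, eq_div_iff two_ne_zero, mul_comm _ (2 : ℝ), ← mul_assoc,
      two_mul_cos_mul_cos]
    push_cast
    congr 1 <;> congr 1 <;> ring
  rw [mul_apply, diagonal_apply]
  simp only [transpose_apply, dctMatrix, of_apply]
  rw [Fin.sum_univ_eq_sum_range (fun j => cosineMode n γ j * cosineMode n γ' j),
    sum_congr rfl fun j _ => hprod j, ← sum_div, sum_add_distrib]
  have hγ := γ.isLt
  have hγ' := γ'.isLt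
  by_cases hγγ' : γ = γ'
  · subst hγγ'
    simp only [if_true, sub_self, Int.cast_zero, zero_mul, zero_div, mul_zero, cos_zero,
      sum_const, card_range, nsmul_eq_mul, mul_one]
    split_ifs with hγ₀
    · simp only [hγ₀, CharP.cast_eq_zero, add_zero, Int.cast_zero, zero_mul, zero_div,
        mul_zero, cos_zero, sum_const, card_range, nsmul_eq_mul, mul_one]
      ring
    · rw [sum_range_cos_odd_mul_eq_zero (by omega) (abs_lt.mpr ⟨by omega, by omega⟩)]
      ring
  · have hne : (γ : ℕ) ≠ γ' := Fin.val_ne_of_ne hγγ'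
    rw [if_neg hγγ',
      sum_range_cos_odd_mul_eq_zero (by omega) (abs_lt.mpr ⟨by omega, by omega⟩),
      sum_range_cos_odd_mul_eq_zero (by omega) (abs_lt.mpr ⟨by omega, by omega⟩)]
    norm_num

theorem isUnit_det_dctMatrix (n : ℕ) : IsUnit (dctMatrix n).det := by
  rw [isUnit_iff_ne_zero, ← mul_self_ne_zero]
  nth_rewrite 1 [← det_transpose]
  rw [← det_mul, dctMatrix_transpose_mul_self, det_diagonal]
  refine prod_ne_zero_iff.mpr fun γ _ => ?_
  have hn : (0 : ℝ) < n := by exact_mod_cast γ.pos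
  split_ifs
  exacts [hn.ne', (half_pos hn).ne']

theorem blockA_eq_kronecker (m n : ℕ) :
    blockA m n = chainA m ⊗ₖ (1 : Matrix (Fin n) (Fin n) ℝ) + 1 ⊗ₖ chainA n := by
  ext ⟨i, α⟩ ⟨k, β⟩
  simp only [blockA, chainA, Matrix.add_apply, kroneckerMap_apply, of_apply, one_apply,
    Fin.ext_iff]
  split_ifs <;> ring1

theorem det_chainA_add_smul_one {n : ℕ} (hn : 2 ≤ n) (c : ℝ) :
    (chainA n + c • 1).det = ∏ α ∈ range n, (pathEigenvalue n α + c) := by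
  rw [det_add_smul_one_of_mul_eq_mul_diagonal (isUnit_det_dctMatrix n) (chainA_mul_dctMatrix hn),
    Fin.prod_univ_eq_prod_range (fun α => pathEigenvalue n α + c)]

theorem det_blockA_sub_smul_one {m : ℕ} (hm : 2 ≤ m) (n : ℕ) (a : ℝ) :
    (blockA m n - a • 1).det =
      ∏ γ ∈ range m, (chainA n + (pathEigenvalue m γ - a) • 1).det := by
  rw [blockA_eq_kronecker, sub_eq_add_neg, ← neg_smul, ← one_kronecker_one, ← kronecker_smul,
    add_assoc, ← kronecker_add, det_kronecker_one_add_one_kronecker (isUnit_det_dctMatrix m)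
    (chainA_mul_dctMatrix hm), ← Fin.prod_univ_eq_prod_range]
  simp only [add_assoc, ← add_smul, neg_add_eq_sub]

theorem stmt9 (m n : ℕ) (hm : 2 ≤ m) (hn : 2 ≤ n) (a : ℝ) :
    Matrix.det (blockA m n - a • (1 : Matrix (Fin m × Fin n) (Fin m × Fin n) ℝ)) =
        ∏ γ ∈ Finset.range m,
          Matrix.det (chainA n +
            (2 * (1 - Real.cos (γ * Real.pi / m)) - a) • (1 : Matrix (Fin n) (Fin n) ℝ)) ∧
      Matrix.det (blockA m n - a • (1 : Matrix (Fin m × Fin n) (Fin m × Fin n) ℝ)) =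
        (-1) ^ (m * n) * ∏ γ ∈ Finset.range m, ∏ α ∈ Finset.range n,
          (a - (2 * (1 - Real.cos (γ * Real.pi / m)) +
            2 * (1 - Real.cos (α * Real.pi / n)))) := by
  refine ⟨det_blockA_sub_smul_one hm n a, ?_⟩
  have hsign : ∀ γ α : ℕ, pathEigenvalue n α + (pathEigenvalue m γ - a) =
      -1 * (a - (pathEigenvalue m γ + pathEigenvalue n α)) := fun _ _ => by ring
  rw [det_blockA_sub_smul_one hm n a]
  simp only [det_chainA_add_smul_one hn, hsign, prod_mul_distrib, prod_const, card_range,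
    ← pow_mul, mul_comm n m]
  rfl
end

section
/- For N ≥ 2 and a ∈ (0, 2(1 - cos(π/N))), writing θ = arccos((2-a)/2) one has 0 < θ < π/N, and hence f_N(a) = -a·sin(Nθ)/sin(θ) < 0; i.e., the characteristic polynomial det(A - aI) of the chain matrix A is strictly negative on the interval between its two smallest eigenvalues 0 and 2(1 - cos(π/N)). -/
open Real Matrix

noncomputable def trid (d : ℕ → ℝ) (n : ℕ) : Matrix (Fin n) (Fin n) ℝ :=
  Matrix.of fun i j =>
    if (i : ℕ) = (j : ℕ) then d i
    else if (i : ℕ) + 1 = (j : ℕ) ∨ (j : ℕ) + 1 = (i : ℕ) then -1 else 0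

lemma trid_rec (d : ℕ → ℝ) (n : ℕ) :
    (trid d (n+2)).det
      = d 0 * (trid (fun k => d (k+1)) (n+1)).det - (trid (fun k => d (k+2)) n).det := by
  rw [Matrix.det_succ_row_zero, Fin.sum_univ_succ, Fin.sum_univ_succ]
  have hrest : ∀ j : Fin n,
      ((-1:ℝ) ^ ((j.succ.succ : Fin (n+2)) : ℕ) * trid d (n+2) 0 j.succ.succ *
        ((trid d (n+2)).submatrix Fin.succ (j.succ.succ).succAbove).det) = 0 := by
    intro j
    have : trid d (n+2) 0 j.succ.succ = 0 := by
      simp only [trid, Matrix.of_apply, Fin.val_succ, Fin.val_zero]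
      split_ifs <;> first | rfl | omega | simp_all
    simp [this]
  rw [Finset.sum_congr rfl (fun j _ => hrest j), Finset.sum_const_zero]
  have h00 : trid d (n+2) 0 0 = d 0 := by simp [trid]
  have h01 : trid d (n+2) 0 (Fin.succ 0) = -1 := by simp [trid]
  have hA : (trid d (n+2)).submatrix Fin.succ ((0 : Fin (n+2)).succAbove)
      = trid (fun k => d (k+1)) (n+1) := by
    ext i j
    simp only [trid, Matrix.submatrix_apply, Matrix.of_apply, Fin.succAbove_zero,
      Fin.val_succ]
    split_ifs <;> first | rfl | omega | simp_all
  -- the j = 1 minor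
  set B := (trid d (n+2)).submatrix Fin.succ ((Fin.succ 0 : Fin (n+2)).succAbove) with hB
  have hBdet : B.det = - (trid (fun k => d (k+2)) n).det := by
    rw [Matrix.det_succ_column_zero, Fin.sum_univ_succ]
    have hB00 : B 0 0 = -1 := by
      simp [hB, trid, Fin.succAbove, Fin.lt_def]
    have hBr : ∀ i : Fin n, B i.succ 0 = 0 := by
      intro i
      simp only [hB, Matrix.submatrix_apply, trid, Matrix.of_apply, Fin.succAbove,
        Fin.lt_def, Fin.val_succ, Fin.castSucc_zero, Fin.val_zero]
      split_ifs <;> first | rfl | omega | simp_all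
    have hBsub : B.submatrix Fin.succ Fin.succ
        = trid (fun k => d (k+2)) n := by
      ext i j
      simp only [hB, Matrix.submatrix_apply, trid, Matrix.of_apply, Fin.succAbove,
        Fin.lt_def, Fin.val_succ, Fin.castSucc_zero, Fin.val_zero, Fin.succAbove_zero]
      split_ifs <;> first | rfl | omega | simp_all
    simp [hB00, hBsub, hBr]
  rw [h00, h01, hA, hBdet]
  simp only [Fin.val_zero, Fin.val_succ, pow_zero, pow_one]
  ring

lemma Esin (a θ : ℝ) (h : 2 - a = 2 * Real.cos θ) (m : ℕ) :
    (trid (fun k => if k = m - 1 then 1 - a else 2 - a) m).det * Real.sin θ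
      = Real.sin ((m + 1) * θ) - Real.sin (m * θ) := by
  induction m using Nat.strong_induction_on with
  | _ m ih =>
    match m with
    | 0 =>
      simp [Matrix.det_fin_zero]
    | 1 =>
      rw [Matrix.det_fin_one]
      have h1 : trid (fun k => if k = 1 - 1 then 1 - a else 2 - a) 1 0 0 = 1 - a := by
        simp [trid]
      rw [h1]
      have : ((1:ℕ) + 1 : ℝ) * θ = θ + θ := by push_cast; ring
      rw [this, Real.sin_add]
      have ha' : 1 - a = 2 * Real.cos θ - 1 := by linarith
      rw [ha']
      push_cast
      ring
    | (n+2) =>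
      rw [trid_rec]
      have e1 : trid (fun k => (fun k => if k = n + 2 - 1 then 1 - a else 2 - a) (k+1)) (n+1)
          = trid (fun k => if k = n + 1 - 1 then 1 - a else 2 - a) (n+1) := by
        ext i j
        simp only [trid, Matrix.of_apply]
        split_ifs <;> first | rfl | omega | simp_all
      have e2 : trid (fun k => (fun k => if k = n + 2 - 1 then 1 - a else 2 - a) (k+2)) n
          = trid (fun k => if k = n - 1 then 1 - a else 2 - a) n := by
        ext i j
        have := i.isLt
        simp only [trid, Matrix.of_apply]
        split_ifs <;> first | rfl | omega | simp_all
      have hd0 : (if (0:ℕ) = n + 2 - 1 then 1 - a else 2 - a) = 2 - a :=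
        if_neg (by omega)
      rw [e1, e2, hd0]
      have ih1 := ih (n+1) (by omega)
      have ih2 := ih n (by omega)
      have expand : (2 - a) * ((trid (fun k => if k = n + 1 - 1 then 1 - a else 2 - a) (n+1)).det * Real.sin θ)
          - (trid (fun k => if k = n - 1 then 1 - a else 2 - a) n).det * Real.sin θ
          = ((2 - a) * (trid (fun k => if k = n + 1 - 1 then 1 - a else 2 - a) (n+1)).det
            - (trid (fun k => if k = n - 1 then 1 - a else 2 - a) n).det) * Real.sin θ := by ring
      rw [← expand, ih1, ih2, h]
      have c1 : ((n + 2 : ℕ) + 1 : ℝ) * θ = ((n:ℝ) + 2) * θ + θ := by push_cast; ring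
      have c2 : ((n + 2 : ℕ) : ℝ) * θ = ((n:ℝ) + 2) * θ := by push_cast; ring
      have c3 : ((n + 1 : ℕ) + 1 : ℝ) * θ = ((n:ℝ) + 2) * θ := by push_cast; ring
      have c4 : ((n + 1 : ℕ) : ℝ) * θ = ((n:ℝ) + 2) * θ - θ := by push_cast; ring
      have c5 : ((n : ℕ) + 1 : ℝ) * θ = ((n:ℝ) + 2) * θ - θ := by push_cast; ring
      have c6 : ((n : ℕ) : ℝ) * θ = ((n:ℝ) + 2) * θ - θ - θ := by push_cast; ring
      rw [c1, c2, c3, c4, c5, c6]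
      simp only [Real.sin_add, Real.sin_sub, Real.cos_add, Real.cos_sub]
      linear_combination (-Real.sin (((n:ℝ) + 2) * θ)) * (Real.sin_sq_add_cos_sq θ)

theorem stmt17 (N : ℕ) (hN : 2 ≤ N) (a : ℝ)
    (ha : a ∈ Set.Ioo (0 : ℝ) (2 * (1 - Real.cos (Real.pi / N)))) :
    (0 < Real.arccos ((2 - a) / 2) ∧ Real.arccos ((2 - a) / 2) < Real.pi / N) ∧
      Matrix.det (chainA N - a • (1 : Matrix (Fin N) (Fin N) ℝ)) < 0 := by
  obtain ⟨ha0, ha2⟩ := ha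
  set θ := Real.arccos ((2 - a) / 2) with hθ
  have hNR : (2:ℝ) ≤ (N:ℝ) := by exact_mod_cast hN
  have hNpos : (0:ℝ) < (N:ℝ) := by linarith
  have hπN0 : 0 < Real.pi / N := div_pos Real.pi_pos hNpos
  have hπN2 : Real.pi / N ≤ Real.pi / 2 :=
    div_le_div_of_nonneg_left Real.pi_pos.le (by norm_num) hNR
  have hcosN : 0 ≤ Real.cos (Real.pi / N) :=
    Real.cos_nonneg_of_mem_Icc ⟨by linarith [Real.pi_pos], hπN2⟩
  have halt2 : a < 2 := by nlinarith
  have hcosθ : Real.cos θ = (2 - a) / 2 :=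
    Real.cos_arccos (by linarith) (by linarith)
  have h2a : 2 - a = 2 * Real.cos θ := by rw [hcosθ]; ring
  have hθpos : 0 < θ := Real.arccos_pos.mpr (by linarith)
  have hθπ : θ ≤ Real.pi := Real.arccos_le_pi _
  have hcosgt : Real.cos (Real.pi / N) < Real.cos θ := by
    rw [hcosθ]; linarith
  have hθlt : θ < Real.pi / N := by
    by_contra hc
    push_neg at hc
    rcases eq_or_lt_of_le hc with h | h
    · rw [← h] at hcosgt; linarith
    · have := Real.strictAntiOn_cos ⟨hπN0.le, by linarith [Real.pi_pos]⟩ ⟨hθpos.le, hθπ⟩ h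
      linarith
  refine ⟨⟨hθpos, hθlt⟩, ?_⟩
  -- rewrite N = n + 2
  obtain ⟨n, rfl⟩ : ∃ n, N = n + 2 := ⟨N - 2, by omega⟩
  have hmat : chainA (n+2) - a • (1 : Matrix (Fin (n+2)) (Fin (n+2)) ℝ)
      = trid (fun k => (if k = 0 ∨ k = n + 1 then 1 else 2) - a) (n+2) := by
    ext i j
    simp only [Matrix.sub_apply, Matrix.smul_apply, Matrix.one_apply, chainA, trid,
      Matrix.of_apply, smul_eq_mul, Fin.ext_iff]
    split_ifs <;> first | rfl | ring1 | (exfalso; (try simp only [false_or, or_false, not_or] at *) <;> omega) | simp_all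
  rw [hmat, trid_rec]
  have hd0 : ((if (0:ℕ) = 0 ∨ (0:ℕ) = n + 1 then (1:ℝ) else 2) - a) = 1 - a := by
    rw [if_pos (Or.inl rfl)]
  have e1 : trid (fun k => (if k + 1 = 0 ∨ k + 1 = n + 1 then (1:ℝ) else 2) - a) (n+1)
      = trid (fun k => if k = (n+1) - 1 then 1 - a else 2 - a) (n+1) := by
    ext i j
    have := i.isLt
    simp only [trid, Matrix.of_apply]
    split_ifs <;> first | rfl | ring1 | (exfalso; (try simp only [false_or, or_false, not_or] at *) <;> omega) | simp_all
  have e2 : trid (fun k => (if k + 2 = 0 ∨ k + 2 = n + 1 then (1:ℝ) else 2) - a) n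
      = trid (fun k => if k = n - 1 then 1 - a else 2 - a) n := by
    ext i j
    have := i.isLt
    simp only [trid, Matrix.of_apply]
    split_ifs <;> first | rfl | ring1 | (exfalso; (try simp only [false_or, or_false, not_or] at *) <;> omega) | simp_all
  rw [hd0, e1, e2]
  have key1 := Esin a θ h2a (n+1)
  have key2 := Esin a θ h2a n
  have hθltπ : θ < Real.pi := by linarith [Real.pi_pos]
  have hsθ : 0 < Real.sin θ := Real.sin_pos_of_pos_of_lt_pi hθpos hθltπ
  push_cast at hθlt
  have hsinN : 0 < Real.sin (((n:ℝ) + 2) * θ) := by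
    apply Real.sin_pos_of_pos_of_lt_pi
    · positivity
    · have h1 : ((n:ℝ) + 2) * θ < ((n:ℝ) + 2) * (Real.pi / ((n:ℝ) + 2)) := by
        apply mul_lt_mul_of_pos_left hθlt (by positivity)
      have h2 : ((n:ℝ) + 2) * (Real.pi / ((n:ℝ) + 2)) = Real.pi := by
        field_simp
      linarith
  set E1 := (trid (fun k => if k = n + 1 - 1 then 1 - a else 2 - a) (n+1)).det with hE1
  set E0 := (trid (fun k => if k = n - 1 then 1 - a else 2 - a) n).det with hE0
  have hkey : ((1 - a) * E1 - E0) * Real.sin θ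
      = (2 * Real.cos θ - 2) * Real.sin (((n:ℝ) + 2) * θ) := by
    have expand : ((1 - a) * E1 - E0) * Real.sin θ
        = (1 - a) * (E1 * Real.sin θ) - E0 * Real.sin θ := by ring
    rw [expand, key1, key2]
    push_cast
    have h1a : (1:ℝ) - a = 2 * Real.cos θ - 1 := by linarith
    rw [h1a,
      show ((n:ℝ) + 1 + 1) * θ = ((n:ℝ) + 1) * θ + θ from by ring,
      show (n:ℝ) * θ = ((n:ℝ) + 1) * θ - θ from by ring,
      show ((n:ℝ) + 2) * θ = ((n:ℝ) + 1) * θ + θ from by ring]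
    simp only [Real.sin_add, Real.sin_sub]
    ring
  have hma : 2 * Real.cos θ - 2 = -a := by linarith
  have hneg : ((1 - a) * E1 - E0) * Real.sin θ < 0 := by
    rw [hkey, hma]
    nlinarith [mul_pos ha0 hsinN]
  by_contra h'
  push_neg at h'
  nlinarith [mul_nonneg h' hsθ.le]
end
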